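/- A 4×4 real symmetric matrix V = [[A,C],[C^T,B]] satisfies V + iΩ ≥ 0 if and only if: A > 0, B > 0, Δ(V) ≤ 1 + det V, and 2√(det A · det B) + (det C)² ≤ det V + det A · det B, where Δ(V) = det A + det B + 2 det C. -/

import Mathlib

open Matrix
open scoped ComplexOrder

def omega2 : Matrix (Fin 2) (Fin 2) ℝ := !![0, 1; -1, 0]

/-- The two-mode symplectic form Ω = ω ⊕ ω, in block form. -/
def Omega2mode : Matrix (Fin 2 ⊕ Fin 2) (Fin 2 ⊕ Fin 2) ℝ :=
  Matrix.fromBlocks omega2 0 0 omega2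

noncomputable def cplx {ι : Type*} (M : Matrix ι ι ℝ) : Matrix ι ι ℂ :=
  M.map Complex.ofReal

/-!
Local symplectic maps `S₁ ⊕ S₂` (`det Sᵢ = 1`) fix `Ω`, so they preserve the condition `V + iΩ ≥ 0`
as well as `det A`, `det B`, `det C` and `det V`; they bring positive definite `A` and `B` to
`√(det A) • 1` and `√(det B) • 1`. For this normal form the characteristic polynomial of the
Hermitian matrix `V + iΩ` is a quartic whose coefficients involve only `a`, `b`, `det C` and
`tr (C Cᵀ)`. The matrix is positive semidefinite iff none of its real roots is negative, i.e. iff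
the coefficients alternate in sign, and this is exactly the pair of inequalities.
Positivity of `A` is forced by the corner `A + iω ≥ 0`: its real part gives `A ≥ 0`, and
`det (A + iω) = det A - 1 ≥ 0`.
-/

lemma quartic_roots_nonneg_iff {l : Fin 4 → ℝ} {e₁ e₂ e₃ e₄ : ℝ}
    (h : ∀ x, ∏ i, (x - l i) = x ^ 4 - e₁ * x ^ 3 + e₂ * x ^ 2 - e₃ * x + e₄) :
    (∀ i, 0 ≤ l i) ↔ 0 ≤ e₁ ∧ 0 ≤ e₂ ∧ 0 ≤ e₃ ∧ 0 ≤ e₄ := by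
  constructor
  · intro hl
    have := hl 0; have := hl 1; have := hl 2; have := hl 3
    simp only [Fin.prod_univ_four] at h
    -- Vieta's formulas, read off from the values at `0, ±1, ±2`
    have he₁ : e₁ = l 0 + l 1 + l 2 + l 3 := by
      linear_combination (h 2 - h (-2)) / 12 - (h 1 - h (-1)) / 6
    have he₂ : e₂ = l 0 * l 1 + l 0 * l 2 + l 0 * l 3 + l 1 * l 2 + l 1 * l 3 + l 2 * l 3 := by
      linear_combination h 0 - (h 1 + h (-1)) / 2
    have he₃ : e₃ = l 0 * l 1 * l 2 + l 0 * l 1 * l 3 + l 0 * l 2 * l 3 + l 1 * l 2 * l 3 := by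
      linear_combination 2 * (h 1 - h (-1)) / 3 - (h 2 - h (-2)) / 12
    have he₄ : e₄ = l 0 * l 1 * l 2 * l 3 := by linear_combination -h 0
    rw [he₁, he₂, he₃, he₄]
    exact ⟨by positivity, by positivity, by positivity, by positivity⟩
  · rintro ⟨h₁, h₂, h₃, h₄⟩ i
    by_contra! hneg
    set y := -l i
    have hy : 0 < y := neg_pos.2 hneg
    have hroot : y ^ 4 + e₁ * y ^ 3 + e₂ * y ^ 2 + e₃ * y + e₄ = 0 := by
      rw [← Finset.prod_eq_zero (f := fun j => l i - l j) (Finset.mem_univ i) (sub_self _), h]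
      ring
    have : 0 < y ^ 4 + e₁ * y ^ 3 + e₂ * y ^ 2 + e₃ * y + e₄ := by positivity
    exact this.ne' hroot

lemma Matrix.IsHermitian.posSemidef_iff_of_det_scalar_sub {𝕜 n : Type*} [RCLike 𝕜] [Fintype n]
    [DecidableEq n] (hn : Fintype.card n = 4) {M : Matrix n n 𝕜} (hM : M.IsHermitian)
    {e₁ e₂ e₃ e₄ : ℝ} (h : ∀ x : ℝ, (scalar n (x : 𝕜) - M).det
      = ((x ^ 4 - e₁ * x ^ 3 + e₂ * x ^ 2 - e₃ * x + e₄ : ℝ) : 𝕜)) :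
    M.PosSemidef ↔ 0 ≤ e₁ ∧ 0 ≤ e₂ ∧ 0 ≤ e₃ ∧ 0 ≤ e₄ := by
  let e := (Fintype.equivFinOfCardEq hn).symm
  rw [hM.posSemidef_iff_eigenvalues_nonneg, Pi.le_def, ← e.forall_congr_right]
  refine quartic_roots_nonneg_iff fun x => RCLike.ofReal_injective (K := 𝕜) ?_
  rw [← h, ← eval_charpoly, hM.charpoly_eq, Polynomial.eval_prod, ← e.prod_comp]
  simp

section cplx

variable {ι : Type*}

lemma cplx_mul [Fintype ι] (M N : Matrix ι ι ℝ) : cplx (M * N) = cplx M * cplx N :=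
  Matrix.map_mul (f := Complex.ofRealHom)

lemma conjTranspose_cplx (M : Matrix ι ι ℝ) : (cplx M)ᴴ = cplx Mᵀ := by
  ext i j
  simp [cplx]

lemma IsUnit.cplx [Fintype ι] [DecidableEq ι] {M : Matrix ι ι ℝ} (hM : IsUnit M) :
    IsUnit (cplx M) :=
  hM.map Complex.ofRealHom.mapMatrix

lemma star_ofReal_comp_dotProduct_cplx_mulVec [Fintype ι] (M : Matrix ι ι ℝ) (v : ι → ℝ) :
    star (Complex.ofReal ∘ v) ⬝ᵥ cplx M *ᵥ (Complex.ofReal ∘ v) = ((v ⬝ᵥ M *ᵥ v : ℝ) : ℂ) := by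
  simp [cplx, dotProduct, mulVec]

variable {Ω : Matrix ι ι ℝ}

lemma conjTranspose_cplx_add_I_smul (hΩ : Ωᵀ = -Ω) (V : Matrix ι ι ℝ) :
    (cplx V + Complex.I • cplx Ω)ᴴ = cplx Vᵀ + Complex.I • cplx Ω := by
  ext i j
  have := congrFun (congrFun hΩ j) i
  simp_all [cplx]

lemma isHermitian_cplx_add_I_smul_iff (hΩ : Ωᵀ = -Ω) (V : Matrix ι ι ℝ) :
    (cplx V + Complex.I • cplx Ω).IsHermitian ↔ Vᵀ = V := by
  rw [IsHermitian, conjTranspose_cplx_add_I_smul hΩ, add_left_inj]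
  exact (Matrix.map_injective Complex.ofReal_injective).eq_iff

lemma Matrix.PosSemidef.of_cplx_add_I_smul [Fintype ι] (hΩ : Ωᵀ = -Ω) {V : Matrix ι ι ℝ}
    (h : (cplx V + Complex.I • cplx Ω).PosSemidef) : V.PosSemidef := by
  refine posSemidef_iff_dotProduct_mulVec.2
    ⟨(isHermitian_cplx_add_I_smul_iff hΩ V).1 h.1, fun v => ?_⟩
  have hΩv : v ⬝ᵥ Ω *ᵥ v = 0 := by
    have h' := congrArg (fun M => v ⬝ᵥ M *ᵥ v) hΩ
    simp only [mulVec_transpose, neg_mulVec, dotProduct_neg] at h'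
    rw [dotProduct_comm, ← dotProduct_mulVec] at h'
    linarith
  have hv : star (Complex.ofReal ∘ v) ⬝ᵥ (cplx V + Complex.I • cplx Ω) *ᵥ (Complex.ofReal ∘ v)
      = ((v ⬝ᵥ V *ᵥ v : ℝ) : ℂ) := by
    simp only [add_mulVec, smul_mulVec, dotProduct_add, dotProduct_smul,
      star_ofReal_comp_dotProduct_cplx_mulVec, hΩv]
    simp
  simpa [hv] using h.dotProduct_mulVec_nonneg (Complex.ofReal ∘ v)

lemma posSemidef_cplx_conj_add_I_smul_iff [Fintype ι] [DecidableEq ι] {S : Matrix ι ι ℝ}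
    (hS : IsUnit S) (hΩ : S * Ω * Sᵀ = Ω) (V : Matrix ι ι ℝ) :
    (cplx (S * V * Sᵀ) + Complex.I • cplx Ω).PosSemidef
      ↔ (cplx V + Complex.I • cplx Ω).PosSemidef := by
  have hconj : cplx S * (cplx V + Complex.I • cplx Ω) * star (cplx S)
      = cplx (S * V * Sᵀ) + Complex.I • cplx Ω := by
    rw [star_eq_conjTranspose, conjTranspose_cplx, Matrix.mul_add, Matrix.add_mul,
      Matrix.mul_smul, Matrix.smul_mul, ← cplx_mul, ← cplx_mul, ← cplx_mul, ← cplx_mul, hΩ]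
  rw [← hconj]
  exact hS.cplx.posSemidef_star_right_conjugate_iff

end cplx

lemma omega2_transpose : omega2ᵀ = -omega2 := by
  ext i j
  fin_cases i <;> fin_cases j <;> simp [omega2]

lemma Omega2mode_transpose : Omega2modeᵀ = -Omega2mode := by
  simp [Omega2mode, fromBlocks_transpose, omega2_transpose, fromBlocks_neg]

lemma mul_omega2_mul_transpose (S : Matrix (Fin 2) (Fin 2) ℝ) :
    S * omega2 * Sᵀ = S.det • omega2 := by
  ext i j
  fin_cases i <;> fin_cases j <;>
    simp [omega2, mul_apply, Fin.sum_univ_two, det_fin_two] <;> ring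

lemma fromBlocks_mul_Omega2mode_mul_transpose {S₁ S₂ : Matrix (Fin 2) (Fin 2) ℝ}
    (h₁ : S₁.det = 1) (h₂ : S₂.det = 1) :
    fromBlocks S₁ 0 0 S₂ * Omega2mode * (fromBlocks S₁ 0 0 S₂)ᵀ = Omega2mode := by
  simp [Omega2mode, fromBlocks_transpose, fromBlocks_multiply, mul_omega2_mul_transpose, h₁, h₂]

lemma fromBlocks_mul_fromBlocks_mul_transpose {R : Type*} [CommRing R]
    (S₁ S₂ A B C : Matrix (Fin 2) (Fin 2) R) :
    fromBlocks S₁ 0 0 S₂ * fromBlocks A C Cᵀ B * (fromBlocks S₁ 0 0 S₂)ᵀ =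
      fromBlocks (S₁ * A * S₁ᵀ) (S₁ * C * S₂ᵀ) (S₁ * C * S₂ᵀ)ᵀ (S₂ * B * S₂ᵀ) := by
  simp [fromBlocks_transpose, fromBlocks_multiply, Matrix.mul_assoc]

lemma Matrix.PosDef.of_posSemidef_cplx_add_I_smul_omega2 {X : Matrix (Fin 2) (Fin 2) ℝ}
    (h : (cplx X + Complex.I • cplx omega2).PosSemidef) : X.PosDef := by
  have hX := PosSemidef.of_cplx_add_I_smul omega2_transpose h
  have hsymm : X 1 0 = X 0 1 := hX.isHermitian.apply 0 1
  have hdet : (cplx X + Complex.I • cplx omega2).det = ((X.det - 1 : ℝ) : ℂ) := by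
    simp only [cplx, omega2, det_fin_two, add_apply, map_apply, smul_apply, of_apply, cons_val',
      cons_val_zero, cons_val_one, cons_val_fin_one, Complex.ofReal_zero, Complex.ofReal_one,
      Complex.ofReal_neg, Complex.ofReal_sub, Complex.ofReal_mul, smul_eq_mul, mul_zero, mul_one,
      mul_neg, add_zero, hsymm]
    ring_nf
    rw [Complex.I_sq]
    ring
  have h1 : 1 ≤ X.det := by
    have := h.det_nonneg
    rw [hdet, Complex.zero_le_real] at this
    linarith
  exact hX.posDef_iff_isUnit.2 ((isUnit_iff_isUnit_det X).2 (isUnit_iff_ne_zero.2 (by positivity)))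

lemma Matrix.PosDef.exists_det_eq_one_mul_mul_transpose_eq_smul_one
    {A : Matrix (Fin 2) (Fin 2) ℝ} (hA : A.PosDef) :
    ∃ S : Matrix (Fin 2) (Fin 2) ℝ, S.det = 1 ∧ S * A * Sᵀ = √A.det • 1 := by
  have hsymm : A 1 0 = A 0 1 := hA.isHermitian.apply 0 1
  have hp : 0 < A 0 0 := hA.diag_pos
  set a := √A.det
  have ha : 0 < a := Real.sqrt_pos.2 hA.det_pos
  have ha2 : a ^ 2 = A 0 0 * A 1 1 - A 0 1 * A 0 1 := by
    rw [Real.sq_sqrt hA.det_pos.le, det_fin_two, hsymm]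
  have hap : 0 < a * A 0 0 := mul_pos ha hp
  -- `S = (a p)^{-1/2} [[a, 0], [-q, p]]` is a rescaled inverse Cholesky factor of
  -- `A = [[p, q], [q, r]]`
  refine ⟨(√(a * A 0 0))⁻¹ • !![a, 0; -A 0 1, A 0 0], ?_, ?_⟩
  · rw [det_smul, det_fin_two_of, Fintype.card_fin, inv_pow, Real.sq_sqrt hap.le]
    field_simp
    ring
  · have hT : !![a, 0; -A 0 1, A 0 0] * A * (!![a, 0; -A 0 1, A 0 0])ᵀ
        = (a * (a * A 0 0)) • (1 : Matrix (Fin 2) (Fin 2) ℝ) := by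
      ext i j
      fin_cases i <;> fin_cases j <;>
        simp [mul_apply, vecMul, dotProduct, Fin.sum_univ_two, hsymm]
      · ring
      · ring
      · left; ring
      · linear_combination -A 0 0 * ha2
    rw [transpose_smul, Matrix.smul_mul, Matrix.mul_smul, Matrix.smul_mul, hT, smul_smul, smul_smul,
      ← sq, inv_pow, Real.sq_sqrt hap.le]
    congr 1
    field_simp

lemma det_fromBlocks_smul_one_transpose {R : Type*} [CommRing R] (a b : R)
    (C : Matrix (Fin 2) (Fin 2) R) :
    (fromBlocks (a • 1) C Cᵀ (b • 1)).det = (a * b) ^ 2 - a * b * (C * Cᵀ).trace + C.det ^ 2 := by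
  refine (det_reindex_self (finSumFinEquiv : Fin 2 ⊕ Fin 2 ≃ Fin 4) _).symm.trans ?_
  rw [det_succ_row_zero]
  simp [det_succ_row_zero, Fin.sum_univ_succ, Fin.succAbove, finSumFinEquiv, Fin.addCases,
    trace_fin_two, mul_apply]
  ring

lemma det_scalar_sub_cplx_fromBlocks_smul_one (a b : ℝ) (C : Matrix (Fin 2) (Fin 2) ℝ) (x : ℝ) :
    (scalar _ (x : ℂ) - (cplx (fromBlocks (a • 1) C Cᵀ (b • 1)) + Complex.I • cplx Omega2mode)).det
      = ((x ^ 4 - 2 * (a + b) * x ^ 3 + ((a + b) ^ 2 + (2 * a * b - 2 - (C * Cᵀ).trace)) * x ^ 2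
          - (a + b) * (2 * a * b - 2 - (C * Cᵀ).trace) * x
          + ((fromBlocks (a • 1) C Cᵀ (b • 1)).det + 1 - a ^ 2 - b ^ 2 - 2 * C.det) : ℝ) : ℂ) := by
  rw [det_fromBlocks_smul_one_transpose]
  refine (det_reindex_self (finSumFinEquiv : Fin 2 ⊕ Fin 2 ≃ Fin 4) _).symm.trans ?_
  rw [det_succ_row_zero]
  simp [det_succ_row_zero, Fin.sum_univ_succ, Fin.succAbove, finSumFinEquiv, Fin.addCases,
    trace_fin_two, mul_apply, cplx, Omega2mode, omega2]
  ring_nf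
  rw [Complex.I_sq]
  ring

lemma posSemidef_cplx_fromBlocks_smul_one_iff {a b : ℝ} (ha : 0 < a) (hb : 0 < b)
    (C : Matrix (Fin 2) (Fin 2) ℝ) :
    (cplx (fromBlocks (a • 1) C Cᵀ (b • 1)) + Complex.I • cplx Omega2mode).PosSemidef ↔
      (a ^ 2 + b ^ 2 + 2 * C.det ≤ 1 + (fromBlocks (a • 1) C Cᵀ (b • 1)).det ∧
        2 * (a * b) + C.det ^ 2 ≤ (fromBlocks (a • 1) C Cᵀ (b • 1)).det + a ^ 2 * b ^ 2) := by
  have hherm :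
      (cplx (fromBlocks (a • 1) C Cᵀ (b • 1)) + Complex.I • cplx Omega2mode).IsHermitian :=
    (isHermitian_cplx_add_I_smul_iff Omega2mode_transpose _).2 (by simp [fromBlocks_transpose])
  rw [hherm.posSemidef_iff_of_det_scalar_sub (by simp)
    (det_scalar_sub_cplx_fromBlocks_smul_one a b C), det_fromBlocks_smul_one_transpose]
  set t := (C * Cᵀ).trace
  have hab : 0 < a * b := mul_pos ha hb
  have hcoeff₃ : 0 ≤ (a + b) * (2 * a * b - 2 - t) ↔ 0 ≤ 2 * a * b - 2 - t :=
    mul_nonneg_iff_of_pos_left (by positivity)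
  have hineq : 2 * (a * b) + C.det ^ 2 ≤ (a * b) ^ 2 - a * b * t + C.det ^ 2 + a ^ 2 * b ^ 2 ↔
      0 ≤ 2 * a * b - 2 - t := by
    rw [← mul_nonneg_iff_of_pos_left hab]
    constructor <;> intro <;> linarith
  constructor
  · rintro ⟨-, -, h₃, h₄⟩
    exact ⟨by linarith, hineq.2 (hcoeff₃.1 h₃)⟩
  · rintro ⟨h₁, h₂⟩
    have hs := hineq.1 h₂
    exact ⟨by positivity, add_nonneg (sq_nonneg _) hs, hcoeff₃.2 hs, by linarith⟩

lemma posSemidef_cplx_fromBlocks_iff_of_posDef {A B : Matrix (Fin 2) (Fin 2) ℝ} (hA : A.PosDef)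
    (hB : B.PosDef) (C : Matrix (Fin 2) (Fin 2) ℝ) :
    (cplx (fromBlocks A C Cᵀ B) + Complex.I • cplx Omega2mode).PosSemidef ↔
      (A.det + B.det + 2 * C.det ≤ 1 + (fromBlocks A C Cᵀ B).det ∧
        2 * √(A.det * B.det) + C.det ^ 2 ≤ (fromBlocks A C Cᵀ B).det + A.det * B.det) := by
  obtain ⟨S₁, hS₁, hA₁⟩ := hA.exists_det_eq_one_mul_mul_transpose_eq_smul_one
  obtain ⟨S₂, hS₂, hB₂⟩ := hB.exists_det_eq_one_mul_mul_transpose_eq_smul_one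
  have hS : (fromBlocks S₁ 0 0 S₂).det = 1 := by simp [det_fromBlocks_zero₂₁, hS₁, hS₂]
  have hnormal := fromBlocks_mul_fromBlocks_mul_transpose S₁ S₂ A B C
  rw [hA₁, hB₂] at hnormal
  have hdetV := congrArg det hnormal
  rw [det_mul, det_mul, det_transpose, hS, one_mul, mul_one] at hdetV
  have hdetC : (S₁ * C * S₂ᵀ).det = C.det := by simp [hS₁, hS₂]
  rw [← posSemidef_cplx_conj_add_I_smul_iff ((isUnit_iff_isUnit_det _).2 (by simp [hS]))
    (fromBlocks_mul_Omega2mode_mul_transpose hS₁ hS₂), hnormal,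
    posSemidef_cplx_fromBlocks_smul_one_iff (Real.sqrt_pos.2 hA.det_pos)
      (Real.sqrt_pos.2 hB.det_pos), ← hdetV, hdetC, Real.sq_sqrt hA.det_pos.le, Real.sq_sqrt hB.det_pos.le,
    Real.sqrt_mul hA.det_pos.le]

theorem genuineness_local_invariants_general (A B C : Matrix (Fin 2) (Fin 2) ℝ) :
    (cplx (Matrix.fromBlocks A C Cᵀ B) + Complex.I • cplx Omega2mode).PosSemidef
      ↔ (A.PosDef ∧ B.PosDef ∧
         A.det + B.det + 2 * C.det ≤ 1 + (Matrix.fromBlocks A C Cᵀ B).det ∧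
         2 * Real.sqrt (A.det * B.det) + C.det ^ 2
           ≤ (Matrix.fromBlocks A C Cᵀ B).det + A.det * B.det) := by
  refine ⟨fun h => ?_, fun ⟨hA, hB, hI⟩ => (posSemidef_cplx_fromBlocks_iff_of_posDef hA hB C).2 hI⟩
  have hblocks : cplx (fromBlocks A C Cᵀ B) + Complex.I • cplx Omega2mode
      = fromBlocks (cplx A + Complex.I • cplx omega2) (cplx C) (cplx Cᵀ)
          (cplx B + Complex.I • cplx omega2) := by
    simp [cplx, Omega2mode, fromBlocks_map, fromBlocks_smul, fromBlocks_add]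
  have hcorners := hblocks ▸ h
  have hA := PosDef.of_posSemidef_cplx_add_I_smul_omega2 (hcorners.submatrix Sum.inl)
  have hB := PosDef.of_posSemidef_cplx_add_I_smul_omega2 (hcorners.submatrix Sum.inr)
  exact ⟨hA, hB, (posSemidef_cplx_fromBlocks_iff_of_posDef hA hB C).1 h⟩

/-- Local-invariant genuineness criterion: V = [[A,C],[Cᵀ,B]] satisfies V + iΩ ≥ 0 iff
A > 0, B > 0, Δ(V) ≤ 1 + det V, and 2√(det A det B) + (det C)² ≤ det V + det A det B. -/
theorem genuineness_local_invariants (A B C : Matrix (Fin 2) (Fin 2) ℝ)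
    (hA : Aᵀ = A) (hB : Bᵀ = B) :
    (cplx (Matrix.fromBlocks A C Cᵀ B) + Complex.I • cplx Omega2mode).PosSemidef
      ↔ (A.PosDef ∧ B.PosDef ∧
         A.det + B.det + 2 * C.det ≤ 1 + (Matrix.fromBlocks A C Cᵀ B).det ∧
         2 * Real.sqrt (A.det * B.det) + C.det ^ 2
           ≤ (Matrix.fromBlocks A C Cᵀ B).det + A.det * B.det) :=
  genuineness_local_invariants_general A B C
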